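/- For every n ≥ 0 and every f : V_n → ℝ, max_{x∈V_n} |f(x)| ≤ (3^{−n} Σ_{y∈V_n} f(y)²)^{1/2} + 6 √(𝓔_n(f,f)). -/

import Mathlib

open Set MeasureTheory Filter Topology
open scoped Classical ENNReal NNReal BoundedContinuousFunction

noncomputable section

/-- The plane, with the Euclidean norm. -/
abbrev Pt : Type := EuclideanSpace ℝ (Fin 2)

/-- The three vertexes of the initial equilateral triangle. -/
def ptA : Fin 3 → Pt
  | 0 => (WithLp.equiv 2 (Fin 2 → ℝ)).symm ![0, 0]
  | 1 => (WithLp.equiv 2 (Fin 2 → ℝ)).symm ![1, 0]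
  | 2 => (WithLp.equiv 2 (Fin 2 → ℝ)).symm ![1 / 2, Real.sqrt 3 / 2]

/-- The contraction `fᵢ(z) = (z + aᵢ)/2`. -/
def sgMap (i : Fin 3) (z : Pt) : Pt := (2 : ℝ)⁻¹ • (z + ptA i)

/-- The vertex sets `V_n`. -/
def Vn : ℕ → Finset Pt
  | 0 => {ptA 0, ptA 1, ptA 2}
  | n + 1 => (Vn n).image (sgMap 0) ∪ (Vn n).image (sgMap 1) ∪ (Vn n).image (sgMap 2)

/-- `V* = ⋃ₙ Vₙ`. -/
def Vstar : Set Pt := ⋃ n, (Vn n : Set Pt)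

/-- The Sierpinski gasket `V`, the closure of `V*`. -/
def sg : Set Pt := closure Vstar

lemma Vstar_subset_sg {x : Pt} (hx : x ∈ Vstar) : x ∈ sg :=
  subset_closure hx

lemma Vn_subset_sg {n : ℕ} {x : Pt} (hx : x ∈ Vn n) : x ∈ sg :=
  subset_closure (Set.mem_iUnion.mpr ⟨n, hx⟩)

/-- `{x,y}` is an edge of the graph `Γₙ`. -/
def isEdge (n : ℕ) (x y : Pt) : Prop := ‖x - y‖ = (2 : ℝ) ^ (-(n : ℤ))

/-- The discrete energy form `𝓔ₙ(u,v) = (5/3)ⁿ Σ_{{x,y}∈Eₙ} (u(y)-u(x))(v(y)-v(x))`;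
the sum over unordered pairs is written as half the sum over ordered pairs. -/
def energyBi (n : ℕ) (u v : Pt → ℝ) : ℝ :=
  (5 / 3 : ℝ) ^ n * (1 / 2) *
    ∑ x ∈ Vn n, ∑ y ∈ Vn n, if isEdge n x y then (u y - u x) * (v y - v x) else 0

/-- The discrete energy `𝓔ₙ(u,u)`. -/
def energy (n : ℕ) (u : Pt → ℝ) : ℝ := energyBi n u u

/-- The discrete Laplacian `Δₙ g(x) = 5ⁿ Σ_{y:{x,y}∈Eₙ} (g(y)-g(x))`. -/
def discLap (n : ℕ) (g : Pt → ℝ) (x : Pt) : ℝ :=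
  (5 : ℝ) ^ n * ∑ y ∈ Vn n, if isEdge n x y then g y - g x else 0

/-- A function on `V*` has finite energy if `supₙ 𝓔ₙ(u,u) < ∞`. -/
def FiniteEnergy (u : Pt → ℝ) : Prop := BddAbove (Set.range fun n => energy n u)

/-- The empirical vertex measure `μₙ`, giving mass `3⁻ⁿ` to each point of `Vₙ`. -/
def empMeas (n : ℕ) : Measure Pt :=
  ((3 : ℝ≥0∞) ^ n)⁻¹ • ∑ x ∈ Vn n, Measure.dirac x

/-- Extension by zero of a continuous function on the gasket. -/
def sgExt (f : C(sg, ℝ)) (x : Pt) : ℝ := if hx : x ∈ sg then f ⟨x, hx⟩ else 0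

/-- `h(k)! = h(1)⋯h(k)`, with `h(0)! = 1`. -/
def hfact (h : ℕ → ℝ) (k : ℕ) : ℝ := ∏ i ∈ Finset.range k, h (i + 1)

/-- The partition function `Z(φ) = Σₖ φᵏ/h(k)!`. -/
def Zfun (h : ℕ → ℝ) (φ : ℝ) : ℝ := ∑' k, φ ^ k / hfact h k

/-- The one-site marginal `p_φ(k) = Z(φ)⁻¹ φᵏ/h(k)!`. -/
def pmarg (h : ℕ → ℝ) (φ : ℝ) (k : ℕ) : ℝ := (Zfun h φ)⁻¹ * φ ^ k / hfact h k

/-- The mean of the one-site marginal `p_φ`. -/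
def meanFun (h : ℕ → ℝ) (φ : ℝ) : ℝ := ∑' k : ℕ, (k : ℝ) * pmarg h φ k

/-- The zero-range generator on `Ωₙ = ℕ^{Vₙ}`, summing over ordered pairs `(x,y)`
with `{x,y} ∈ Eₙ`. -/
def zrGen (n : ℕ) (h : ℕ → ℝ) (F : (↥(Vn n) → ℕ) → ℝ) (η : ↥(Vn n) → ℕ) : ℝ :=
  ∑ x : ↥(Vn n), ∑ y : ↥(Vn n),
    if isEdge n x.1 y.1 then
      h (η x) * (F (Function.update (Function.update η x (η x - 1)) y (η y + 1)) - F η)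
    else 0

lemma norm_pt (z : Pt) : ‖z‖ = Real.sqrt (z 0 ^ 2 + z 1 ^ 2) := by
  rw [EuclideanSpace.norm_eq]
  simp [Fin.sum_univ_two, sq_abs]

lemma ptA_norm {i j : Fin 3} (h : i ≠ j) : ‖ptA i - ptA j‖ = 1 := by
  fin_cases i <;> fin_cases j <;> simp_all <;>
    (rw [norm_pt]; push_cast; simp [ptA, PiLp.sub_apply]) <;>
    nlinarith [Real.sq_sqrt (show (0:ℝ) ≤ 3 by norm_num)]

lemma ptA_ne {i j : Fin 3} (h : i ≠ j) : ptA i ≠ ptA j := by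
  intro he
  have := ptA_norm h
  rw [he, sub_self, norm_zero] at this
  norm_num at this

lemma sgMap_sub (i : Fin 3) (x y : Pt) : sgMap i x - sgMap i y = (2:ℝ)⁻¹ • (x - y) := by
  unfold sgMap; rw [← smul_sub]; congr 1; abel

lemma norm_sgMap_sub (i : Fin 3) (x y : Pt) : ‖sgMap i x - sgMap i y‖ = ‖x - y‖ / 2 := by
  rw [sgMap_sub, norm_smul]
  simp [Real.norm_eq_abs]
  ring

lemma sgMap_inj (i : Fin 3) : Function.Injective (sgMap i) := by
  intro a b h
  have h2 : sgMap i a - sgMap i b = 0 := by rw [h, sub_self]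
  rw [sgMap_sub] at h2
  have := smul_eq_zero.mp h2
  rcases this with h3 | h3
  · norm_num at h3
  · exact sub_eq_zero.mp h3

lemma sgMap_fix (i : Fin 3) : sgMap i (ptA i) = ptA i := by
  unfold sgMap
  rw [← two_smul ℝ (ptA i), smul_smul]
  norm_num

lemma sgMap_comm (i j : Fin 3) : sgMap i (ptA j) = sgMap j (ptA i) := by
  unfold sgMap; rw [add_comm]

lemma isEdge_map (i : Fin 3) (n : ℕ) (x y : Pt) :
    isEdge (n+1) (sgMap i x) (sgMap i y) ↔ isEdge n x y := by
  unfold isEdge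
  rw [norm_sgMap_sub]
  have h2 : ((2:ℝ) ^ (-(((n:ℕ)+1):ℤ))) = (2:ℝ) ^ (-(n:ℤ)) / 2 := by
    rw [show (-(((n:ℕ)+1):ℤ)) = (-(n:ℤ)) + (-1) by push_cast; ring, zpow_add₀ (by norm_num : (2:ℝ) ≠ 0)]
    norm_num
    ring
  push_cast [h2]
  constructor <;> intro hh <;> linarith

lemma isEdge_irrefl (n : ℕ) (x : Pt) : ¬ isEdge n x x := by
  unfold isEdge
  rw [sub_self, norm_zero]
  intro h
  have : (0:ℝ) < 2 ^ (-(n:ℤ)) := by positivity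
  linarith [this.le.trans_eq h.symm]

lemma isEdge_zero {i j : Fin 3} (h : i ≠ j) : isEdge 0 (ptA i) (ptA j) := by
  unfold isEdge
  rw [ptA_norm h]
  norm_num

def b1 (z : Pt) : ℝ := z 0 - z 1 / Real.sqrt 3
def b2 (z : Pt) : ℝ := 2 * z 1 / Real.sqrt 3

def bary (j : Fin 3) (z : Pt) : ℝ :=
  if j = 1 then b1 z else if j = 2 then b2 z else 1 - b1 z - b2 z

lemma bary_sum (z : Pt) : bary 0 z + bary 1 z + bary 2 z = 1 := by
  simp [bary]
  ring

lemma sqrt3_ne : Real.sqrt 3 ≠ 0 := by positivity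

lemma bary_eq {z w : Pt} (h1 : bary 1 z = bary 1 w) (h2 : bary 2 z = bary 2 w) : z = w := by
  simp [bary, b1, b2] at h1 h2
  have e2 : z 1 = w 1 := by
    exact h2
  have e1 : z 0 = w 0 := by
    rw [e2] at h1
    linarith
  apply (WithLp.equiv 2 (Fin 2 → ℝ)).injective
  funext k
  fin_cases k
  · exact e1
  · exact e2

lemma sgMap_apply (i : Fin 3) (z : Pt) (k : Fin 2) :
    sgMap i z k = (z k + ptA i k) / 2 := by
  unfold sgMap
  simp [PiLp.smul_apply, PiLp.add_apply, smul_eq_mul]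
  ring

lemma bary_sgMap (j i : Fin 3) (z : Pt) :
    bary j (sgMap i z) = (bary j z + if j = i then 1 else 0) / 2 := by
  have h3 : Real.sqrt 3 ≠ 0 := sqrt3_ne
  fin_cases j <;> fin_cases i <;>
    simp [bary, b1, b2, sgMap_apply, ptA] <;> field_simp <;> ring

lemma Vn_succ (n : ℕ) : Vn (n+1) =
    ((Vn n).image (sgMap 0) ∪ (Vn n).image (sgMap 1)) ∪ (Vn n).image (sgMap 2) := rfl

lemma mem_Vn_succ {n : ℕ} {x : Pt} :
    x ∈ Vn (n+1) ↔ ∃ i : Fin 3, ∃ y ∈ Vn n, sgMap i y = x := by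
  rw [Vn_succ]
  simp only [Finset.mem_union, Finset.mem_image]
  constructor
  · rintro ((⟨y, hy, rfl⟩ | ⟨y, hy, rfl⟩) | ⟨y, hy, rfl⟩)
    exacts [⟨0, y, hy, rfl⟩, ⟨1, y, hy, rfl⟩, ⟨2, y, hy, rfl⟩]
  · rintro ⟨i, y, hy, rfl⟩
    fin_cases i
    · exact Or.inl (Or.inl ⟨y, hy, rfl⟩)
    · exact Or.inl (Or.inr ⟨y, hy, rfl⟩)
    · exact Or.inr ⟨y, hy, rfl⟩

lemma ptA_mem (i : Fin 3) (n : ℕ) : ptA i ∈ Vn n := by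
  induction n with
  | zero => fin_cases i <;> simp [Vn]
  | succ n ih => exact mem_Vn_succ.mpr ⟨i, ptA i, ih, sgMap_fix i⟩

lemma bary_nonneg {n : ℕ} {z : Pt} (hz : z ∈ Vn n) (j : Fin 3) : 0 ≤ bary j z := by
  induction n generalizing z with
  | zero =>
    have : z = ptA 0 ∨ z = ptA 1 ∨ z = ptA 2 := by simpa [Vn] using hz
    have h3 := sqrt3_ne
    rcases this with rfl | rfl | rfl <;> fin_cases j <;>
      simp [bary, b1, b2, ptA] <;> field_simp <;>
      norm_num
  | succ n ih =>
    rcases mem_Vn_succ.mp hz with ⟨i, y, hy, rfl⟩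
    rw [bary_sgMap]
    have := ih hy
    split_ifs <;> linarith

lemma cell_bary_ge {n : ℕ} (i : Fin 3) {x : Pt} (hx : x ∈ Vn n) :
    1/2 ≤ bary i (sgMap i x) := by
  rw [bary_sgMap, if_pos rfl]
  linarith [bary_nonneg hx i]

lemma cell_point_eval {n : ℕ} {i j : Fin 3} (hij : i ≠ j) {x y : Pt}
    (hx : x ∈ Vn n) (hy : y ∈ Vn n) (h : sgMap i x = sgMap j y) (k : Fin 3) :
    bary k (sgMap i x) = if k = i ∨ k = j then 1/2 else 0 := by
  have hi : 1/2 ≤ bary i (sgMap i x) := cell_bary_ge i hx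
  have hj : 1/2 ≤ bary j (sgMap i x) := by rw [h]; exact cell_bary_ge j hy
  have hnn : ∀ m : Fin 3, 0 ≤ bary m (sgMap i x) := fun m =>
    bary_nonneg (mem_Vn_succ.mpr ⟨i, x, hx, rfl⟩) m
  have hsum := bary_sum (sgMap i x)
  fin_cases i <;> fin_cases j <;> simp_all <;> fin_cases k <;> simp_all <;>
    linarith [hnn 0, hnn 1, hnn 2]

lemma cell_inter_eq {n : ℕ} {i j : Fin 3} (hij : i ≠ j) {x x' y y' : Pt}
    (hx : x ∈ Vn n) (hy : y ∈ Vn n) (hx' : x' ∈ Vn n) (hy' : y' ∈ Vn n)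
    (h1 : sgMap i x = sgMap j y) (h2 : sgMap i x' = sgMap j y') :
    sgMap i x = sgMap i x' := by
  apply bary_eq
  · rw [cell_point_eval hij hx hy h1 1, cell_point_eval hij hx' hy' h2 1]
  · rw [cell_point_eval hij hx hy h1 2, cell_point_eval hij hx' hy' h2 2]

def edgePairs (n : ℕ) : Finset (Pt × Pt) :=
  (Vn n ×ˢ Vn n).filter fun p => isEdge n p.1 p.2

def esum (n : ℕ) (u : Pt → ℝ) : ℝ := ∑ p ∈ edgePairs n, (u p.2 - u p.1)^2

lemma energy_eq (n : ℕ) (u : Pt → ℝ) :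
    energy n u = (5/3:ℝ)^n * (1/2) * esum n u := by
  unfold energy energyBi esum edgePairs
  congr 1
  rw [Finset.sum_filter, ← Finset.sum_product']
  apply Finset.sum_congr rfl
  intro p _
  split_ifs <;> ring

lemma esum_nonneg (n : ℕ) (u : Pt → ℝ) : 0 ≤ esum n u :=
  Finset.sum_nonneg fun _ _ => sq_nonneg _

lemma energy_nonneg (n : ℕ) (u : Pt → ℝ) : 0 ≤ energy n u := by
  rw [energy_eq]
  have := esum_nonneg n u
  positivity

def cellF (i : Fin 3) : Pt × Pt → Pt × Pt := fun p => (sgMap i p.1, sgMap i p.2)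

lemma cellPairs_subset (i : Fin 3) (n : ℕ) :
    (edgePairs n).image (cellF i) ⊆ edgePairs (n+1) := by
  intro q hq
  rcases Finset.mem_image.mp hq with ⟨p, hp, rfl⟩
  rcases Finset.mem_filter.mp hp with ⟨hpm, hpe⟩
  rcases Finset.mem_product.mp hpm with ⟨hp1, hp2⟩
  refine Finset.mem_filter.mpr ⟨Finset.mem_product.mpr ⟨?_, ?_⟩, ?_⟩
  · exact mem_Vn_succ.mpr ⟨i, p.1, hp1, rfl⟩
  · exact mem_Vn_succ.mpr ⟨i, p.2, hp2, rfl⟩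
  · exact (isEdge_map i n p.1 p.2).mpr hpe

lemma cellPairs_disj {i j : Fin 3} (hij : i ≠ j) (n : ℕ) :
    Disjoint ((edgePairs n).image (cellF i)) ((edgePairs n).image (cellF j)) := by
  rw [Finset.disjoint_left]
  intro q hqi hqj
  rcases Finset.mem_image.mp hqi with ⟨p, hp, hq⟩
  rcases Finset.mem_image.mp hqj with ⟨p', hp', hq'⟩
  rcases Finset.mem_filter.mp hp with ⟨hpm, hpe⟩
  rcases Finset.mem_filter.mp hp' with ⟨hpm', _⟩
  rcases Finset.mem_product.mp hpm with ⟨hp1, hp2⟩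
  rcases Finset.mem_product.mp hpm' with ⟨hp1', hp2'⟩
  have e1 : sgMap i p.1 = sgMap j p'.1 := by
    have := hq.trans hq'.symm
    exact (Prod.ext_iff.mp this).1
  have e2 : sgMap i p.2 = sgMap j p'.2 := by
    have := hq.trans hq'.symm
    exact (Prod.ext_iff.mp this).2
  have := cell_inter_eq hij hp1 hp1' hp2 hp2' e1 e2
  have hpp : p.1 = p.2 := sgMap_inj i this
  exact isEdge_irrefl n p.1 (by rw [hpp] at hpe ⊢; exact hpe)

lemma esum_image (i : Fin 3) (n : ℕ) (u : Pt → ℝ) :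
    ∑ q ∈ (edgePairs n).image (cellF i), (u q.2 - u q.1)^2 = esum n (u ∘ sgMap i) := by
  rw [Finset.sum_image]
  · rfl
  · intro p _ p' _ h
    have h1 : sgMap i p.1 = sgMap i p'.1 := (Prod.ext_iff.mp h).1
    have h2 : sgMap i p.2 = sgMap i p'.2 := (Prod.ext_iff.mp h).2
    exact Prod.ext (sgMap_inj i h1) (sgMap_inj i h2)

lemma cells_le (n : ℕ) (u : Pt → ℝ) :
    esum n (u ∘ sgMap 0) + esum n (u ∘ sgMap 1) + esum n (u ∘ sgMap 2) ≤ esum (n+1) u := by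
  rw [← esum_image 0 n u, ← esum_image 1 n u, ← esum_image 2 n u]
  rw [← Finset.sum_union (cellPairs_disj (by decide : (0:Fin 3) ≠ 1) n)]
  rw [← Finset.sum_union (by
    rw [Finset.disjoint_union_left]
    exact ⟨cellPairs_disj (by decide : (0:Fin 3) ≠ 2) n,
           cellPairs_disj (by decide : (1:Fin 3) ≠ 2) n⟩)]
  apply Finset.sum_le_sum_of_subset_of_nonneg
  · apply Finset.union_subset
    · exact Finset.union_subset (cellPairs_subset 0 n) (cellPairs_subset 1 n)
    · exact cellPairs_subset 2 n
  · intro q _ _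
    exact sq_nonneg _

lemma cell_energy (n : ℕ) (u : Pt → ℝ) :
    energy n (u ∘ sgMap 0) + energy n (u ∘ sgMap 1) + energy n (u ∘ sgMap 2) ≤
      (3/5) * energy (n+1) u := by
  rw [energy_eq, energy_eq, energy_eq, energy_eq]
  have h := cells_le n u
  have hp : (0:ℝ) < (5/3:ℝ)^n := by positivity
  have key : (3/5:ℝ) * ((5/3:ℝ)^(n+1) * (1/2) * esum (n+1) u)
      = (5/3:ℝ)^n * (1/2) * esum (n+1) u := by ring
  rw [key]
  nlinarith [h, hp]

def Qf (u : Pt → ℝ) : ℝ :=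
  (u (ptA 0) - u (ptA 1))^2 + (u (ptA 1) - u (ptA 2))^2 + (u (ptA 2) - u (ptA 0))^2

lemma key_quad (P Q R X Y Z : ℝ) :
    (P-Q)^2 + (Q-R)^2 + (R-P)^2 ≤
      (5/3) * (((P-Z)^2 + (Z-Y)^2 + (Y-P)^2) + ((Z-Q)^2 + (Q-X)^2 + (X-Z)^2)
        + ((Y-X)^2 + (X-R)^2 + (R-Y)^2)) := by
  have h : (5/3) * (((P-Z)^2 + (Z-Y)^2 + (Y-P)^2) + ((Z-Q)^2 + (Q-X)^2 + (X-Z)^2)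
        + ((Y-X)^2 + (X-R)^2 + (R-Y)^2)) - ((P-Q)^2 + (Q-R)^2 + (R-P)^2)
      = (2/15)*((5*X-(P+2*Q+2*R))^2 + (5*Y-(2*P+Q+2*R))^2 + (5*Z-(2*P+2*Q+R))^2)
        + (1/15)*((5*X-5*Y+P-Q)^2 + (5*Y-5*Z+Q-R)^2 + (5*Z-5*X+R-P)^2) := by
    ring
  nlinarith [sq_nonneg (5*X-(P+2*Q+2*R)), sq_nonneg (5*Y-(2*P+Q+2*R)),
    sq_nonneg (5*Z-(2*P+2*Q+R)), sq_nonneg (5*X-5*Y+P-Q), sq_nonneg (5*Y-5*Z+Q-R),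
    sq_nonneg (5*Z-5*X+R-P), h]

lemma sum3 (f : Pt → ℝ) :
    ∑ x ∈ ({ptA 0, ptA 1, ptA 2} : Finset Pt), f x = f (ptA 0) + f (ptA 1) + f (ptA 2) := by
  have n01 := ptA_ne (show (0:Fin 3) ≠ 1 by decide)
  have n02 := ptA_ne (show (0:Fin 3) ≠ 2 by decide)
  have n12 := ptA_ne (show (1:Fin 3) ≠ 2 by decide)
  rw [Finset.sum_insert (by simp [n01, n02]), Finset.sum_insert (by simp [n12]),
      Finset.sum_singleton]
  ring

lemma energy_zero (u : Pt → ℝ) : energy 0 u = Qf u := by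
  have h01 := isEdge_zero (show (0:Fin 3) ≠ 1 by decide)
  have h02 := isEdge_zero (show (0:Fin 3) ≠ 2 by decide)
  have h10 := isEdge_zero (show (1:Fin 3) ≠ 0 by decide)
  have h12 := isEdge_zero (show (1:Fin 3) ≠ 2 by decide)
  have h20 := isEdge_zero (show (2:Fin 3) ≠ 0 by decide)
  have h21 := isEdge_zero (show (2:Fin 3) ≠ 1 by decide)
  have d0 := isEdge_irrefl 0 (ptA 0)
  have d1 := isEdge_irrefl 0 (ptA 1)
  have d2 := isEdge_irrefl 0 (ptA 2)
  unfold energy energyBi Qf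
  rw [show Vn 0 = {ptA 0, ptA 1, ptA 2} from rfl]
  rw [sum3, sum3, sum3, sum3]
  rw [if_neg d0, if_neg d1, if_neg d2, if_pos h01, if_pos h02, if_pos h10,
      if_pos h12, if_pos h20, if_pos h21]
  ring

lemma Rlem : ∀ (n : ℕ) (u : Pt → ℝ), Qf u ≤ energy n u := by
  intro n
  induction n with
  | zero => intro u; rw [energy_zero]
  | succ n ih =>
    intro u
    have h0 := ih (u ∘ sgMap 0)
    have h1 := ih (u ∘ sgMap 1)
    have h2 := ih (u ∘ sgMap 2)
    have hq0 : Qf (u ∘ sgMap 0) =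
        (u (ptA 0) - u (sgMap 0 (ptA 1)))^2 + (u (sgMap 0 (ptA 1)) - u (sgMap 0 (ptA 2)))^2
          + (u (sgMap 0 (ptA 2)) - u (ptA 0))^2 := by
      unfold Qf; rw [Function.comp_apply, Function.comp_apply, Function.comp_apply, sgMap_fix]
    have hq1 : Qf (u ∘ sgMap 1) =
        (u (sgMap 0 (ptA 1)) - u (ptA 1))^2 + (u (ptA 1) - u (sgMap 1 (ptA 2)))^2
          + (u (sgMap 1 (ptA 2)) - u (sgMap 0 (ptA 1)))^2 := by
      unfold Qf
      rw [Function.comp_apply, Function.comp_apply, Function.comp_apply, sgMap_fix,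
        show sgMap 1 (ptA 0) = sgMap 0 (ptA 1) from sgMap_comm 1 0]
    have hq2 : Qf (u ∘ sgMap 2) =
        (u (sgMap 0 (ptA 2)) - u (sgMap 1 (ptA 2)))^2 + (u (sgMap 1 (ptA 2)) - u (ptA 2))^2
          + (u (ptA 2) - u (sgMap 0 (ptA 2)))^2 := by
      unfold Qf
      rw [Function.comp_apply, Function.comp_apply, Function.comp_apply, sgMap_fix,
        show sgMap 2 (ptA 0) = sgMap 0 (ptA 2) from sgMap_comm 2 0,
        show sgMap 2 (ptA 1) = sgMap 1 (ptA 2) from sgMap_comm 2 1]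
    have hkey := key_quad (u (ptA 0)) (u (ptA 1)) (u (ptA 2))
      (u (sgMap 1 (ptA 2))) (u (sgMap 0 (ptA 2))) (u (sgMap 0 (ptA 1)))
    have hce := cell_energy n u
    unfold Qf
    rw [hq0] at h0; rw [hq1] at h1; rw [hq2] at h2
    linarith [hkey, h0, h1, h2, hce]

lemma pair_le_Qf (u : Pt → ℝ) {k l : Fin 3} (h : k ≠ l) :
    (u (ptA k) - u (ptA l))^2 ≤ Qf u := by
  fin_cases k <;> fin_cases l <;> simp_all <;> unfold Qf <;>
    nlinarith [sq_nonneg (u (ptA 0) - u (ptA 1)), sq_nonneg (u (ptA 1) - u (ptA 2)),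
      sq_nonneg (u (ptA 2) - u (ptA 0))]

lemma cell_le (n : ℕ) (u : Pt → ℝ) (k : Fin 3) :
    energy n (u ∘ sgMap k) ≤ (3/5) * energy (n+1) u := by
  have he0 := energy_nonneg n (u ∘ sgMap 0)
  have he1 := energy_nonneg n (u ∘ sgMap 1)
  have he2 := energy_nonneg n (u ∘ sgMap 2)
  have hce := cell_energy n u
  have hk : k = 0 ∨ k = 1 ∨ k = 2 := by fin_cases k <;> decide
  rcases hk with rfl | rfl | rfl <;> linarith

lemma cell_le2 (n : ℕ) (u : Pt → ℝ) {k l : Fin 3} (h : k ≠ l) :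
    energy n (u ∘ sgMap k) + energy n (u ∘ sgMap l) ≤ (3/5) * energy (n+1) u := by
  have he0 := energy_nonneg n (u ∘ sgMap 0)
  have he1 := energy_nonneg n (u ∘ sgMap 1)
  have he2 := energy_nonneg n (u ∘ sgMap 2)
  have hce := cell_energy n u
  have hk : k = 0 ∨ k = 1 ∨ k = 2 := by fin_cases k <;> decide
  have hl : l = 0 ∨ l = 1 ∨ l = 2 := by fin_cases l <;> decide
  rcases hk with rfl | rfl | rfl <;> rcases hl with rfl | rfl | rfl <;>
    first | exact absurd rfl h | linarith

lemma Dlem : ∀ (n : ℕ) (u : Pt → ℝ), ∀ x ∈ Vn n, ∀ i : Fin 3,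
    (u x - u (ptA i))^2 ≤ (3/2) * energy n u := by
  intro n
  induction n with
  | zero =>
    intro u x hx i
    have hE := energy_nonneg 0 u
    have : x = ptA 0 ∨ x = ptA 1 ∨ x = ptA 2 := by simpa [Vn] using hx
    have hQ : Qf u ≤ energy 0 u := (energy_zero u).ge
    rcases this with rfl | rfl | rfl
    · by_cases h : (0 : Fin 3) = i
      · rw [← h]; simp; linarith
      · have := pair_le_Qf u h; linarith
    · by_cases h : (1 : Fin 3) = i
      · rw [← h]; simp; linarith
      · have := pair_le_Qf u h; linarith
    · by_cases h : (2 : Fin 3) = i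
      · rw [← h]; simp; linarith
      · have := pair_le_Qf u h; linarith
  | succ n ih =>
    intro u x hx i
    rcases mem_Vn_succ.mp hx with ⟨i0, x', hx', rfl⟩
    have he0 := energy_nonneg n (u ∘ sgMap 0)
    have he1 := energy_nonneg n (u ∘ sgMap 1)
    have he2 := energy_nonneg n (u ∘ sgMap 2)
    have hce := cell_energy n u
    have hEn1 := energy_nonneg (n+1) u
    by_cases h : i0 = i
    · subst h
      have key : u (sgMap i0 x') - u (ptA i0)
          = (u ∘ sgMap i0) x' - (u ∘ sgMap i0) (ptA i0) := by
        simp [Function.comp_apply, sgMap_fix]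
      rw [key]
      have h1 := ih (u ∘ sgMap i0) x' hx' i0
      have h2 := cell_le n u i0
      linarith
    · have hs : (u (sgMap i0 x') - u (sgMap i0 (ptA i)))^2
          ≤ (3/2) * energy n (u ∘ sgMap i0) := ih (u ∘ sgMap i0) x' hx' i
      have ht : (u (sgMap i0 (ptA i)) - u (ptA i))^2 ≤ energy n (u ∘ sgMap i) := by
        have e1 : (u ∘ sgMap i) (ptA i0) = u (sgMap i0 (ptA i)) := by
          simp [Function.comp_apply, sgMap_comm i i0]
        have e2 : (u ∘ sgMap i) (ptA i) = u (ptA i) := by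
          simp [Function.comp_apply, sgMap_fix]
        have := pair_le_Qf (u ∘ sgMap i) h
        rw [e1, e2] at this
        exact this.trans (Rlem n (u ∘ sgMap i))
      have hsum2 : energy n (u ∘ sgMap i0) + energy n (u ∘ sgMap i) ≤
          (3/5) * energy (n+1) u := cell_le2 n u h
      nlinarith [sq_nonneg (2*(u (sgMap i0 x') - u (sgMap i0 (ptA i)))
        - 3*(u (sgMap i0 (ptA i)) - u (ptA i))), hs, ht, hsum2]

lemma card_Vn (n : ℕ) : 3^n + 2 ≤ (Vn n).card := by
  induction n with
  | zero =>
    have n01 := ptA_ne (show (0:Fin 3) ≠ 1 by decide)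
    have n02 := ptA_ne (show (0:Fin 3) ≠ 2 by decide)
    have n12 := ptA_ne (show (1:Fin 3) ≠ 2 by decide)
    rw [show Vn 0 = {ptA 0, ptA 1, ptA 2} from rfl]
    rw [Finset.card_insert_of_notMem (by simp [n01, n02]),
        Finset.card_insert_of_notMem (by simp [n12]), Finset.card_singleton]
    norm_num
  | succ n ih =>
    set A := (Vn n).image (sgMap 0) with hA
    set B := (Vn n).image (sgMap 1) with hB
    set C := (Vn n).image (sgMap 2) with hC
    have hcA : A.card = (Vn n).card := Finset.card_image_of_injective _ (sgMap_inj 0)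
    have hcB : B.card = (Vn n).card := Finset.card_image_of_injective _ (sgMap_inj 1)
    have hcC : C.card = (Vn n).card := Finset.card_image_of_injective _ (sgMap_inj 2)
    have hint : ∀ (i j : Fin 3), i ≠ j →
        ((Vn n).image (sgMap i) ∩ (Vn n).image (sgMap j)).card ≤ 1 := by
      intro i j hij
      apply Finset.card_le_one.mpr
      intro a ha b hb
      rcases Finset.mem_inter.mp ha with ⟨ha1, ha2⟩
      rcases Finset.mem_inter.mp hb with ⟨hb1, hb2⟩
      rcases Finset.mem_image.mp ha1 with ⟨p, hp, rfl⟩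
      rcases Finset.mem_image.mp ha2 with ⟨q, hq, hqe⟩
      rcases Finset.mem_image.mp hb1 with ⟨p', hp', rfl⟩
      rcases Finset.mem_image.mp hb2 with ⟨q', hq', hqe'⟩
      exact cell_inter_eq hij hp hq hp' hq' hqe.symm hqe'.symm
    have hAB := Finset.card_union_add_card_inter A B
    have hABC := Finset.card_union_add_card_inter (A ∪ B) C
    have h1 : (A ∩ B).card ≤ 1 := hint 0 1 (by decide)
    have h2 : ((A ∪ B) ∩ C).card ≤ 2 := by
      rw [Finset.union_inter_distrib_right]
      calc (A ∩ C ∪ B ∩ C).card ≤ (A ∩ C).card + (B ∩ C).card := Finset.card_union_le _ _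
        _ ≤ 2 := by
          have hac : (A ∩ C).card ≤ 1 := hint 0 2 (by decide)
          have hbc : (B ∩ C).card ≤ 1 := hint 1 2 (by decide)
          omega
    have hV : Vn (n+1) = (A ∪ B) ∪ C := rfl
    rw [hV]
    have h3 : 3^(n+1) = 3 * 3^n := by ring
    omega


/-- For every `n` and every `f : Vₙ → ℝ`,
`max_{x∈Vₙ} |f(x)| ≤ (3⁻ⁿ Σ_{y∈Vₙ} f(y)²)^{1/2} + 6 √(𝓔ₙ(f,f))`. -/
theorem statement7 (n : ℕ) (u : Pt → ℝ) :
    ∀ x ∈ Vn n, |u x| ≤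
      Real.sqrt (((3 : ℝ) ^ n)⁻¹ * ∑ y ∈ Vn n, u y ^ 2) + 6 * Real.sqrt (energy n u) := by
  intro x hx
  have hE := energy_nonneg n u
  have hne : (Vn n).Nonempty := ⟨ptA 0, ptA_mem 0 n⟩
  obtain ⟨y, hy, hymin⟩ := (Vn n).exists_min_image (fun z => (u z)^2) hne
  have hSnn : (0:ℝ) ≤ ∑ z ∈ Vn n, u z ^ 2 := Finset.sum_nonneg fun _ _ => sq_nonneg _
  -- the minimal value is at most the average
  have hycard : ((Vn n).card : ℝ) * (u y)^2 ≤ ∑ z ∈ Vn n, u z ^ 2 := by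
    have := Finset.card_nsmul_le_sum (Vn n) (fun z => (u z)^2) ((u y)^2) hymin
    simpa [nsmul_eq_mul] using this
  have h3n : (0:ℝ) < (3:ℝ)^n := by positivity
  have hcard : ((3:ℝ)^n) ≤ ((Vn n).card : ℝ) := by
    have h := card_Vn n
    have : ((3^n : ℕ) : ℝ) ≤ ((Vn n).card : ℝ) := by exact_mod_cast le_trans (by omega) h
    simpa using this
  have hyavg : (u y)^2 ≤ ((3:ℝ)^n)⁻¹ * ∑ z ∈ Vn n, u z ^ 2 := by
    rw [inv_mul_eq_div, le_div_iff₀ h3n]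
    nlinarith [sq_nonneg (u y)]
  have hy1 : |u y| ≤ Real.sqrt (((3:ℝ)^n)⁻¹ * ∑ z ∈ Vn n, u z ^ 2) := by
    rw [← Real.sqrt_sq_eq_abs]
    exact Real.sqrt_le_sqrt hyavg
  have hx0 : (u x - u (ptA 0))^2 ≤ (3/2) * energy n u := Dlem n u x hx 0
  have hy0 : (u y - u (ptA 0))^2 ≤ (3/2) * energy n u := Dlem n u y hy 0
  have hxa : |u x - u (ptA 0)| ≤ Real.sqrt ((3/2) * energy n u) := by
    rw [← Real.sqrt_sq_eq_abs]; exact Real.sqrt_le_sqrt hx0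
  have hya : |u y - u (ptA 0)| ≤ Real.sqrt ((3/2) * energy n u) := by
    rw [← Real.sqrt_sq_eq_abs]; exact Real.sqrt_le_sqrt hy0
  have hsq : Real.sqrt ((3/2) * energy n u) ≤ 3 * Real.sqrt (energy n u) := by
    calc Real.sqrt ((3/2) * energy n u) ≤ Real.sqrt (9 * energy n u) :=
          Real.sqrt_le_sqrt (by linarith)
      _ = 3 * Real.sqrt (energy n u) := by
          rw [show (9:ℝ) * energy n u = 3^2 * energy n u by ring, Real.sqrt_mul (by positivity),
            Real.sqrt_sq (by norm_num)]
  have htri : |u x| ≤ |u y| + |u x - u (ptA 0)| + |u y - u (ptA 0)| := by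
    have h1 : |u x| = |u y + (u x - u (ptA 0)) - (u y - u (ptA 0))| := by ring_nf
    rw [h1]
    calc |u y + (u x - u (ptA 0)) - (u y - u (ptA 0))|
        ≤ |u y + (u x - u (ptA 0))| + |u y - u (ptA 0)| := abs_sub _ _
      _ ≤ |u y| + |u x - u (ptA 0)| + |u y - u (ptA 0)| := by
          linarith [abs_add_le (u y) (u x - u (ptA 0))]
  linarith [htri, hy1, hxa, hya, hsq]

end
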